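/- arXiv:1509.01518 — 2 statements merged into one kernel-verified Lean document; each statement's English description precedes it below -/
import Mathlib

section
/- With (B,β) a right H-Hom-comodule algebra, A = B^{coH}, and γ: H → B a convolution invertible H-comodule map with γ(1) = 1: for every b ∈ B, the element b₍₀₎γ⁻¹(b₍₁₎) lies in A = B^{coH}; more precisely ρ(b₍₀₎γ⁻¹(b₍₁₎)) = β(b₍₀₎γ⁻¹(b₍₁₎)) ⊗ 1. -/
open scoped TensorProduct BigOperators

universe u v

/-- A Hom-Hopf algebra over a field `k`, with a chosen Sweedler-type
decomposition (`Idx`, `T`, `d1`, `d2`) of the comultiplication: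
`comul h = ∑ i in T h, d1 h i ⊗ₜ d2 h i`.  The structure map `α` is assumed
bijective (a linear equivalence), as throughout the paper. -/
structure HomHopf (k : Type u) (H : Type v) [Field k] [AddCommGroup H] [Module k H] where
  mul : H →ₗ[k] H →ₗ[k] H
  one : H
  α : H ≃ₗ[k] H
  comul : H →ₗ[k] H ⊗[k] H
  counit : H →ₗ[k] k
  S : H →ₗ[k] H
  Idx : Type v
  T : H → Finset Idx
  d1 : H → Idx → H
  d2 : H → Idx → H
  repr : ∀ h, comul h = ∑ i ∈ T h, d1 h i ⊗ₜ[k] d2 h i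
  α_one : α one = one
  α_mul : ∀ x y, α (mul x y) = mul (α x) (α y)
  one_mul : ∀ x, mul one x = α x
  mul_one : ∀ x, mul x one = α x
  hom_assoc : ∀ x y z, mul (α x) (mul y z) = mul (mul x y) (α z)
  counit_α : ∀ h, counit (α h) = counit h
  comul_α : ∀ h, comul (α h) = ∑ i ∈ T h, α (d1 h i) ⊗ₜ[k] α (d2 h i)
  counit_left : ∀ h, ∑ i ∈ T h, counit (d1 h i) • d2 h i = α h
  counit_right : ∀ h, ∑ i ∈ T h, counit (d2 h i) • d1 h i = α h
  hom_coassoc : ∀ h,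
    (TensorProduct.assoc k H H H) (∑ i ∈ T h, comul (d1 h i) ⊗ₜ[k] α (d2 h i))
      = ∑ i ∈ T h, α (d1 h i) ⊗ₜ[k] comul (d2 h i)
  counit_one : counit one = 1
  counit_mul : ∀ x y, counit (mul x y) = counit x * counit y
  comul_one : comul one = one ⊗ₜ[k] one
  comul_mul : ∀ x y, comul (mul x y)
      = ∑ i ∈ T x, ∑ j ∈ T y, mul (d1 x i) (d1 y j) ⊗ₜ[k] mul (d2 x i) (d2 y j)
  S_α : ∀ h, S (α h) = α (S h)
  S_left : ∀ h, ∑ i ∈ T h, mul (S (d1 h i)) (d2 h i) = counit h • one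
  S_right : ∀ h, ∑ i ∈ T h, mul (d1 h i) (S (d2 h i)) = counit h • one

/-- A unital Hom-associative algebra with bijective structure map. -/
structure HomAlg (k : Type u) (A : Type v) [Field k] [AddCommGroup A] [Module k A] where
  mul : A →ₗ[k] A →ₗ[k] A
  one : A
  β : A ≃ₗ[k] A
  β_one : β one = one
  β_mul : ∀ x y, β (mul x y) = mul (β x) (β y)
  one_mul : ∀ x, mul one x = β x
  mul_one : ∀ x, mul x one = β x
  hom_assoc : ∀ x y z, mul (β x) (mul y z) = mul (mul x y) (β z)

section Comod

variable (k : Type u) (H B : Type v) [Field k]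
  [AddCommGroup H] [Module k H] [AddCommGroup B] [Module k B]

/-- A right Hom-`H`-comodule algebra `(B,β)` with a chosen Sweedler decomposition
`ρ b = ∑ i in Tc b, r0 b i ⊗ₜ r1 b i` of the coaction. -/
structure RComodAlg (HH : HomHopf k H) where
  mul : B →ₗ[k] B →ₗ[k] B
  one : B
  β : B ≃ₗ[k] B
  β_one : β one = one
  β_mul : ∀ x y, β (mul x y) = mul (β x) (β y)
  one_mul : ∀ x, mul one x = β x
  mul_one : ∀ x, mul x one = β x
  hom_assoc : ∀ x y z, mul (β x) (mul y z) = mul (mul x y) (β z)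
  ρ : B →ₗ[k] B ⊗[k] H
  Jdx : Type v
  Tc : B → Finset Jdx
  r0 : B → Jdx → B
  r1 : B → Jdx → H
  reprρ : ∀ b, ρ b = ∑ i ∈ Tc b, r0 b i ⊗ₜ[k] r1 b i
  counit_ρ : ∀ b, ∑ i ∈ Tc b, HH.counit (r1 b i) • r0 b i = β b
  ρ_β : ∀ b, ρ (β b) = ∑ i ∈ Tc b, β (r0 b i) ⊗ₜ[k] HH.α (r1 b i)
  ρ_coassoc : ∀ b, (TensorProduct.assoc k B H H)
      (∑ i ∈ Tc b, ρ (r0 b i) ⊗ₜ[k] HH.α (r1 b i))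
    = ∑ i ∈ Tc b, β (r0 b i) ⊗ₜ[k] HH.comul (r1 b i)
  ρ_mul : ∀ b b', ρ (mul b b')
    = ∑ i ∈ Tc b, ∑ j ∈ Tc b', mul (r0 b i) (r0 b' j) ⊗ₜ[k] HH.mul (r1 b i) (r1 b' j)
  ρ_one : ρ one = one ⊗ₜ[k] HH.one

variable {k H B}

/-- `γ` is a convolution invertible (with inverse `γ'`) right `H`-comodule map
`H → B` with `γ(1) = 1`, i.e. the data of a cleft extension `B^{coH} ⊆ B`. -/
def CleftData {HH : HomHopf k H} (BB : RComodAlg k H B HH) (γ γ' : H →ₗ[k] B) : Prop :=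
  (∀ h, BB.ρ (γ h) = ∑ i ∈ HH.T h, γ (HH.d1 h i) ⊗ₜ[k] HH.d2 h i) ∧
  (∀ h, γ (HH.α h) = BB.β (γ h)) ∧
  (∀ h, ∑ i ∈ HH.T h, BB.mul (γ (HH.d1 h i)) (γ' (HH.d2 h i)) = HH.counit h • BB.one) ∧
  (∀ h, ∑ i ∈ HH.T h, BB.mul (γ' (HH.d1 h i)) (γ (HH.d2 h i)) = HH.counit h • BB.one) ∧
  (γ HH.one = BB.one)

end Comod

/-! Write `b = β(c)`, so that the element is `x = β(c₀) γ⁻¹(α c₁)`. As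
`ρ(u γ⁻¹(h)) = u₀ γ⁻¹(h₂) ⊗ u₁ S(h₁)`, the coaction of `x` is a linear function of
`ρ(c₀) ⊗ α(c₁)`, which Hom-coassociativity of `ρ` replaces by `β(c₀) ⊗ Δ(c₁)`.
Hom-coassociativity of `Δ` then brings a factor `h₁ S(h₂) = ε(h) 1` together in the second
tensor leg, leaving `β²(c₀) γ⁻¹(α² c₁) ⊗ 1 = β(x) ⊗ 1`. -/

open TensorProduct

variable {k : Type u} {H B : Type v} [Field k]
  [AddCommGroup H] [Module k H] [AddCommGroup B] [Module k B]

namespace HomHopf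

variable (HH : HomHopf k H)

theorem counit_S (h : H) : HH.counit (HH.S h) = HH.counit h := by
  have hS := congrArg HH.counit (HH.S_left h)
  simp only [map_sum, map_smul, HH.counit_mul, HH.counit_one, smul_eq_mul, _root_.mul_one]
    at hS
  rw [← HH.counit_α, ← HH.S_α, ← HH.counit_right, ← hS]
  simp only [map_sum, map_smul, smul_eq_mul, mul_comm]

/-- In Sweedler notation: `h₂₂ ⊗ α(h₁) S(h₂₁) = α²(h) ⊗ 1`. -/
theorem sum_tmul_α_mul_S (h : H) :
    ∑ q ∈ HH.T h, ∑ p ∈ HH.T (HH.d2 h q),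
        HH.d2 (HH.d2 h q) p ⊗ₜ[k] HH.mul (HH.α (HH.d1 h q)) (HH.S (HH.d1 (HH.d2 h q) p))
      = HH.α (HH.α h) ⊗ₜ[k] HH.one := by
  set Φ : H ⊗[k] (H ⊗[k] H) →ₗ[k] H ⊗[k] H :=
    (TensorProduct.comm k H H).toLinearMap ∘ₗ map (lift (HH.mul.compl₂ HH.S)) LinearMap.id ∘ₗ
      (TensorProduct.assoc k H H H).symm.toLinearMap
  have hΦ : ∀ a b c, Φ (a ⊗ₜ (b ⊗ₜ c)) = c ⊗ₜ HH.mul a (HH.S b) := fun _ _ _ => rfl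
  have coassoc := congrArg Φ (HH.hom_coassoc h)
  simp only [map_sum, HH.repr, sum_tmul, tmul_sum, assoc_tmul, hΦ] at coassoc
  simp only [← tmul_sum, HH.S_right, tmul_smul, smul_tmul'] at coassoc
  rw [← coassoc, ← sum_tmul]
  simp only [← map_smul, ← map_sum, HH.counit_left]

end HomHopf

namespace RComodAlg

variable {HH : HomHopf k H} (BB : RComodAlg k H B HH)

theorem ρ_β_eq_map (b : B) :
    BB.ρ (BB.β b) = map BB.β.toLinearMap HH.α.toLinearMap (BB.ρ b) := by
  simp [BB.ρ_β, BB.reprρ b]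

/-- The coaction law of the convolution inverse of a cleaving map. -/
def IsSColinear (f : H →ₗ[k] B) : Prop :=
  ∀ h, BB.ρ (f h) = ∑ i ∈ HH.T h, f (HH.d2 h i) ⊗ₜ[k] HH.S (HH.d1 h i)

def twistedMul (f : H →ₗ[k] B) : (B ⊗[k] H) ⊗[k] (H ⊗[k] H) →ₗ[k] B ⊗[k] H :=
  map (lift (BB.mul.compl₂ f)) (lift (HH.mul.compl₂ HH.S)) ∘ₗ
    (tensorTensorTensorComm k B H H H).toLinearMap ∘ₗ
    map LinearMap.id (TensorProduct.comm k H H).toLinearMap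

@[simp]
theorem twistedMul_tmul (f : H →ₗ[k] B) (u : B) (v a g : H) :
    BB.twistedMul f ((u ⊗ₜ v) ⊗ₜ (a ⊗ₜ g)) = BB.mul u (f g) ⊗ₜ HH.mul v (HH.S a) :=
  rfl

namespace IsSColinear

variable {BB} {f : H →ₗ[k] B} (hf : BB.IsSColinear f)
include hf

theorem map_α (h : H) : f (HH.α h) = BB.β (f h) := by
  have hε := congrArg (lift ((LinearMap.lsmul k B).comp HH.counit).flip)
    ((BB.reprρ (f h)).symm.trans (hf h))
  simp only [map_sum, lift.tmul, LinearMap.flip_apply, LinearMap.comp_apply,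
    LinearMap.lsmul_apply, BB.counit_ρ, HH.counit_S] at hε
  rw [hε, ← HH.counit_left, map_sum]
  simp only [map_smul]

theorem ρ_mul (u : B) (h : H) :
    BB.ρ (BB.mul u (f h)) = BB.twistedMul f (BB.ρ u ⊗ₜ HH.comul h) := by
  rw [BB.ρ_mul, BB.reprρ u, sum_tmul, map_sum]
  refine Finset.sum_congr rfl fun i _ => ?_
  rw [HH.repr h, tmul_sum, map_sum]
  simp only [twistedMul_tmul]
  simpa using congrArg (map (BB.mul (BB.r0 u i)) (HH.mul (BB.r1 u i)))
    ((BB.reprρ (f h)).symm.trans (hf h))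

theorem ρ_sum_β_mul (c : B) :
    BB.ρ (∑ i ∈ BB.Tc c, BB.mul (BB.β (BB.r0 c i)) (f (HH.α (BB.r1 c i))))
      = ∑ i ∈ BB.Tc c,
          BB.mul (BB.β (BB.β (BB.r0 c i))) (f (HH.α (HH.α (BB.r1 c i)))) ⊗ₜ HH.one := by
  set Ψ : B ⊗[k] (H ⊗[k] H) →ₗ[k] B ⊗[k] H :=
    BB.twistedMul f ∘ₗ map (map BB.β.toLinearMap HH.α.toLinearMap) HH.comul ∘ₗ
      (TensorProduct.assoc k B H H).symm.toLinearMap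
  have hρ (u : B) (h : H) : BB.ρ (BB.mul (BB.β u) (f (HH.α h)))
      = Ψ (TensorProduct.assoc k B H H (BB.ρ u ⊗ₜ HH.α h)) := by
    rw [hf.ρ_mul, BB.ρ_β_eq_map]
    simp [Ψ]
  have hΨ (u : B) (h : H) : Ψ (BB.β u ⊗ₜ HH.comul h)
      = BB.mul (BB.β (BB.β u)) (f (HH.α (HH.α h))) ⊗ₜ HH.one := by
    have := congrArg (map (BB.mul (BB.β (BB.β u)) ∘ₗ f) LinearMap.id) (HH.sum_tmul_α_mul_S h)
    simp only [map_sum, map_tmul, LinearMap.comp_apply, LinearMap.id_apply] at this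
    rw [← this, HH.repr h, tmul_sum, map_sum]
    refine Finset.sum_congr rfl fun q _ => ?_
    simp [Ψ, HH.repr, tmul_sum]
  calc _ = ∑ i ∈ BB.Tc c,
          Ψ (TensorProduct.assoc k B H H (BB.ρ (BB.r0 c i) ⊗ₜ HH.α (BB.r1 c i))) := by
        simp only [map_sum, hρ]
    _ = Ψ (∑ i ∈ BB.Tc c, BB.β (BB.r0 c i) ⊗ₜ HH.comul (BB.r1 c i)) := by
        rw [← map_sum, ← map_sum, BB.ρ_coassoc]
    _ = _ := by simp only [map_sum, hΨ]

end IsSColinear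

end RComodAlg

theorem cleft_coinvariant_element_general {k : Type u} {H B : Type v} [Field k]
    [AddCommGroup H] [Module k H] [AddCommGroup B] [Module k B]
    (HH : HomHopf k H) (BB : RComodAlg k H B HH) (γ' : H →ₗ[k] B)
    (hγ'ρ : ∀ h, BB.ρ (γ' h) = ∑ i ∈ HH.T h, γ' (HH.d2 h i) ⊗ₜ[k] HH.S (HH.d1 h i)) :
    ∀ b : B, BB.ρ (∑ i ∈ BB.Tc b, BB.mul (BB.r0 b i) (γ' (BB.r1 b i)))
      = BB.β (∑ i ∈ BB.Tc b, BB.mul (BB.r0 b i) (γ' (BB.r1 b i))) ⊗ₜ[k] HH.one := by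
  have hγ' : BB.IsSColinear γ' := hγ'ρ
  intro b
  obtain ⟨c, rfl⟩ := BB.β.surjective b
  have hsum : ∑ i ∈ BB.Tc (BB.β c), BB.mul (BB.r0 (BB.β c) i) (γ' (BB.r1 (BB.β c) i))
      = ∑ i ∈ BB.Tc c, BB.mul (BB.β (BB.r0 c i)) (γ' (HH.α (BB.r1 c i))) := by
    simpa using congrArg (lift (BB.mul.compl₂ γ')) ((BB.reprρ (BB.β c)).symm.trans (BB.ρ_β c))
  rw [hsum, hγ'.ρ_sum_β_mul, map_sum, sum_tmul]
  refine Finset.sum_congr rfl fun i _ => ?_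
  rw [BB.β_mul, hγ'.map_α]

/-- With `(B,β)` a right `H`-Hom-comodule algebra and `γ` a convolution
invertible comodule map with `γ(1)=1`, for every `b ∈ B` the element `b₍₀₎γ⁻¹(b₍₁₎)`
lies in the coinvariants `A = B^{coH}`:
`ρ(b₍₀₎γ⁻¹(b₍₁₎)) = β(b₍₀₎γ⁻¹(b₍₁₎)) ⊗ 1`. -/
theorem cleft_coinvariant_element {k : Type u} {H B : Type v} [Field k]
    [AddCommGroup H] [Module k H] [AddCommGroup B] [Module k B]
    (HH : HomHopf k H) (BB : RComodAlg k H B HH) (γ γ' : H →ₗ[k] B)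
    (hγ : CleftData BB γ γ')
    (hγ'ρ : ∀ h, BB.ρ (γ' h) = ∑ i ∈ HH.T h, γ' (HH.d2 h i) ⊗ₜ[k] HH.S (HH.d1 h i)) :
    ∀ b : B, BB.ρ (∑ i ∈ BB.Tc b, BB.mul (BB.r0 b i) (γ' (BB.r1 b i)))
      = BB.β (∑ i ∈ BB.Tc b, BB.mul (BB.r0 b i) (γ' (BB.r1 b i))) ⊗ₜ[k] HH.one :=
  cleft_coinvariant_element_general HH BB γ' hγ'ρ
end

section
/- Let A ⊆ B be an H-cleft extension via γ with γ(1)=1 (α, β invertible). Define h·a = (γ(α⁻²(h₁))β⁻¹(a))γ⁻¹(α⁻¹(h₂)) and σ(h,g) = (γ(α⁻³(h₁))γ(α⁻³(g₁)))γ⁻¹(α⁻³(h₂g₂)). Then for all h,g ∈ H and a ∈ A, the elements h·a and σ(h,g) lie in A = B^{coH}. -/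
open scoped TensorProduct BigOperators

universe u v

/-! Both `h·a` and `σ(h,g)` have the form `Σ b γ⁻¹(z)` for a tensor `u = Σ b ⊗ z ∈ B ⊗ H`
satisfying the twisted cotensor condition `Σ ρ(b) ⊗ z = Σ β(b) ⊗ z₁ ⊗ α⁻¹(z₂)`: for `h·a`,
`u = (γ ⊗ id)Δ(α⁻²h) · (β⁻¹(a) ⊗ 1)`; for `σ(h,g)`, `u = (γ ⊗ id)Δ(α⁻³h) · (γ ⊗ id)Δ(α⁻³g)`.
The condition holds for `(γ ⊗ id)Δ(x)` by Hom-coassociativity, for `a ⊗ 1` with `a` coinvariant,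
and is preserved by the product of `B ⊗ H`. For such `u`, the coaction of `Σ b γ⁻¹(z)` has
`H`-component `z₁ S(α⁻¹z₂₁)`, which Hom-coassociativity and the antipode axiom reduce to `1`. -/

open TensorProduct

namespace TensorProduct

variable {R M N P Q : Type*} [CommRing R] [AddCommGroup M] [Module R M] [AddCommGroup N]
  [Module R N] [AddCommGroup P] [Module R P] [AddCommGroup Q] [Module R Q]

theorem map_map₂_of_map_mul {f : M →ₗ[R] M →ₗ[R] M} {g : N →ₗ[R] N →ₗ[R] N}
    {f' : P →ₗ[R] P →ₗ[R] P} {g' : Q →ₗ[R] Q →ₗ[R] Q} (φ : M →ₗ[R] P) (ψ : N →ₗ[R] Q)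
    (hφ : ∀ m m', φ (f m m') = f' (φ m) (φ m')) (hψ : ∀ n n', ψ (g n n') = g' (ψ n) (ψ n'))
    (x y : M ⊗[R] N) :
    map φ ψ (map₂ f g x y) = map₂ f' g' (map φ ψ x) (map φ ψ y) := by
  suffices (map₂ f g).compr₂ (map φ ψ) = (map₂ f' g').compl₁₂ (map φ ψ) (map φ ψ) from
    LinearMap.congr_fun₂ this x y
  ext m n m' n'
  simp [hφ, hψ]

theorem assoc_symm_map₂ (f : M →ₗ[R] M →ₗ[R] M) (g : N →ₗ[R] N →ₗ[R] N)
    (h : P →ₗ[R] P →ₗ[R] P) (x y : M ⊗[R] (N ⊗[R] P)) :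
    (TensorProduct.assoc R M N P).symm (map₂ f (map₂ g h) x y)
      = map₂ (map₂ f g) h ((TensorProduct.assoc R M N P).symm x)
          ((TensorProduct.assoc R M N P).symm y) := by
  suffices (map₂ f (map₂ g h)).compr₂ (TensorProduct.assoc R M N P).symm.toLinearMap =
      (map₂ (map₂ f g) h).compl₁₂ (TensorProduct.assoc R M N P).symm.toLinearMap
        (TensorProduct.assoc R M N P).symm.toLinearMap from
    LinearMap.congr_fun₂ this x y
  ext m n p m' n' p'
  simp

end TensorProduct

namespace HomHopf

variable {k : Type u} {H : Type v} [Field k] [AddCommGroup H] [Module k H] (HH : HomHopf k H)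

theorem alpha_symm_one : HH.α.symm HH.one = HH.one := by
  rw [LinearEquiv.symm_apply_eq, HH.α_one]

theorem alpha_symm_mul (x y : H) :
    HH.α.symm (HH.mul x y) = HH.mul (HH.α.symm x) (HH.α.symm y) := by
  rw [LinearEquiv.symm_apply_eq, HH.α_mul]
  simp

theorem comul_mul_eq_map₂ (x y : H) :
    HH.comul (HH.mul x y) = map₂ HH.mul HH.mul (HH.comul x) (HH.comul y) := by
  simp [HH.comul_mul, HH.repr, map_sum, Finset.sum_comm (s := HH.T x)]

theorem comul_alpha_symm (x : H) :
    HH.comul (HH.α.symm x) = map HH.α.symm.toLinearMap HH.α.symm.toLinearMap (HH.comul x) := by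
  conv_rhs => rw [← HH.α.apply_symm_apply x, HH.comul_α]
  simp [HH.repr, map_sum]

theorem assoc_map_comul_alpha (x : H) :
    TensorProduct.assoc k H H H (map HH.comul HH.α.toLinearMap (HH.comul x)) =
      map HH.α.toLinearMap HH.comul (HH.comul x) := by
  rw [HH.repr x]
  simpa [map_sum] using HH.hom_coassoc x

theorem counit_antipode (x : H) : HH.counit (HH.S x) = HH.counit x := by
  have h := congrArg HH.counit (HH.S_left x)
  simp only [map_sum, HH.counit_mul, map_smul, HH.counit_one, smul_eq_mul, _root_.mul_one] at h
  rw [← HH.counit_α, ← HH.S_α, ← HH.counit_right, map_sum, map_sum, ← h]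
  simp [mul_comm]

theorem lift_mul_antipode_comul (x : H) :
    lift (HH.mul.compl₂ HH.S) (HH.comul x) = HH.counit x • HH.one := by
  simp [HH.repr, HH.S_right]

theorem lift_mul_antipode_coassoc (x : H) :
    map (lift (HH.mul.compl₂ HH.S)) LinearMap.id
        ((TensorProduct.assoc k H H H).symm (map HH.α.toLinearMap HH.comul (HH.comul x))) =
      HH.one ⊗ₜ HH.α (HH.α x) := by
  rw [← HH.assoc_map_comul_alpha, LinearEquiv.symm_apply_apply, ← LinearMap.comp_apply,
    ← map_comp, HH.repr x, ← HH.counit_left x]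
  simp [map_sum, lift_mul_antipode_comul, TensorProduct.smul_tmul, tmul_sum]

end HomHopf

namespace RComodAlg

variable {k : Type u} {H B : Type v} [Field k] [AddCommGroup H] [Module k H] [AddCommGroup B]
  [Module k B] {HH : HomHopf k H} (BB : RComodAlg k H B HH)

theorem rho_mul (b b' : B) : BB.ρ (BB.mul b b') = map₂ BB.mul HH.mul (BB.ρ b) (BB.ρ b') := by
  simp [BB.ρ_mul, BB.reprρ, map_sum, Finset.sum_comm (s := BB.Tc b)]

theorem rho_beta_symm (b : B) :
    BB.ρ (BB.β.symm b) = map BB.β.symm.toLinearMap HH.α.symm.toLinearMap (BB.ρ b) := by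
  conv_rhs => rw [← BB.β.apply_symm_apply b, BB.ρ_β]
  simp [BB.reprρ, map_sum]

theorem rho_beta_symm_of_coinvariant {a : B} (ha : BB.ρ a = BB.β a ⊗ₜ HH.one) :
    BB.ρ (BB.β.symm a) = BB.β (BB.β.symm a) ⊗ₜ HH.one := by
  simp [rho_beta_symm, ha, HH.alpha_symm_one]

theorem beta_apply_eq_apply_alpha {γ' : H →ₗ[k] B}
    (hγ'ρ : ∀ h, BB.ρ (γ' h) = ∑ i ∈ HH.T h, γ' (HH.d2 h i) ⊗ₜ[k] HH.S (HH.d1 h i)) (h : H) :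
    BB.β (γ' h) = γ' (HH.α h) := by
  have hβ : BB.β (γ' h) = TensorProduct.rid k B (map LinearMap.id HH.counit (BB.ρ (γ' h))) := by
    rw [BB.reprρ, ← BB.counit_ρ]
    simp [map_sum]
  rw [hβ, hγ'ρ, ← HH.counit_left]
  simp [map_sum, HH.counit_antipode]

def IsCotensor (u : B ⊗[k] H) : Prop :=
  map BB.ρ LinearMap.id u = (TensorProduct.assoc k B H H).symm
    (map BB.β.toLinearMap (map LinearMap.id HH.α.symm.toLinearMap ∘ₗ HH.comul) u)

theorem isCotensor_tmul_one {b : B} (hb : BB.ρ b = BB.β b ⊗ₜ HH.one) :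
    BB.IsCotensor (b ⊗ₜ HH.one) := by
  simp [IsCotensor, hb, HH.comul_one, HH.alpha_symm_one]

theorem isCotensor_map_comul {γ : H →ₗ[k] B}
    (hγρ : ∀ h, BB.ρ (γ h) = ∑ i ∈ HH.T h, γ (HH.d1 h i) ⊗ₜ[k] HH.d2 h i)
    (hγα : ∀ h, γ (HH.α h) = BB.β (γ h)) (x : H) :
    BB.IsCotensor (map γ LinearMap.id (HH.comul x)) := by
  have h := congrArg (fun t => map (map γ LinearMap.id) HH.α.symm.toLinearMap
    ((TensorProduct.assoc k H H H).symm t)) (HH.assoc_map_comul_alpha x)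
  simpa [IsCotensor, HH.repr, hγρ, ← hγα, map_sum, sum_tmul, tmul_sum] using h

variable {BB}

theorem IsCotensor.mul {u v : B ⊗[k] H} (hu : BB.IsCotensor u) (hv : BB.IsCotensor v) :
    BB.IsCotensor (map₂ BB.mul HH.mul u v) := by
  have hD : ∀ x y, (map LinearMap.id HH.α.symm.toLinearMap ∘ₗ HH.comul) (HH.mul x y) =
      map₂ HH.mul HH.mul ((map LinearMap.id HH.α.symm.toLinearMap ∘ₗ HH.comul) x)
        ((map LinearMap.id HH.α.symm.toLinearMap ∘ₗ HH.comul) y) := fun x y => by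
    simp only [LinearMap.comp_apply, HH.comul_mul_eq_map₂]
    exact map_map₂_of_map_mul _ _ (fun _ _ => rfl) HH.alpha_symm_mul _ _
  unfold IsCotensor at *
  rw [map_map₂_of_map_mul _ _ BB.rho_mul (fun _ _ => rfl), hu, hv, ← assoc_symm_map₂,
    map_map₂_of_map_mul _ _ BB.β_mul hD]

theorem IsCotensor.rho_lift_mul {γ' : H →ₗ[k] B}
    (hγ'ρ : ∀ h, BB.ρ (γ' h) = ∑ i ∈ HH.T h, γ' (HH.d2 h i) ⊗ₜ[k] HH.S (HH.d1 h i))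
    {u : B ⊗[k] H} (hu : BB.IsCotensor u) :
    BB.ρ (lift (BB.mul.compl₂ γ') u) = BB.β (lift (BB.mul.compl₂ γ') u) ⊗ₜ HH.one := by
  set G : (B ⊗[k] H) ⊗[k] H →ₗ[k] B ⊗[k] H :=
    lift ((map₂ BB.mul HH.mul).compl₂ (BB.ρ ∘ₗ γ'))
  have hρ : BB.ρ ∘ₗ lift (BB.mul.compl₂ γ') = G ∘ₗ map BB.ρ LinearMap.id := by
    ext b z
    simp [G, rho_mul]
  -- on `b ⊗ z`, with `w = α⁻¹z`: `Σ β(b)γ'(w₂₂) ⊗ α(w₁)S(w₂₁) = β(b)γ'(αz) ⊗ 1`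
  have hG : G ∘ₗ (TensorProduct.assoc k B H H).symm.toLinearMap ∘ₗ
      map BB.β.toLinearMap (map LinearMap.id HH.α.symm.toLinearMap ∘ₗ HH.comul) =
      (TensorProduct.mk k B H).flip HH.one ∘ₗ BB.β.toLinearMap ∘ₗ lift (BB.mul.compl₂ γ') := by
    ext b z
    have h := congrArg ((TensorProduct.comm k H B).toLinearMap ∘ₗ
      map LinearMap.id (BB.mul (BB.β b) ∘ₗ γ')) (HH.lift_mul_antipode_coassoc (HH.α.symm z))
    simp only [HH.comul_alpha_symm] at h
    simp [G, HH.repr, hγ'ρ, map_sum, tmul_sum] at h ⊢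
    rw [h, BB.β_mul, BB.beta_apply_eq_apply_alpha hγ'ρ]
  calc BB.ρ (lift (BB.mul.compl₂ γ') u) = G (map BB.ρ LinearMap.id u) :=
        LinearMap.congr_fun hρ u
    _ = _ := by rw [hu]; exact LinearMap.congr_fun hG u

end RComodAlg

section S6

variable {k : Type u} {H B : Type v} [Field k]
  [AddCommGroup H] [Module k H] [AddCommGroup B] [Module k B]

/-- The crossed-product action `h·a = (γ(α⁻²(h₁))β⁻¹(a))γ⁻¹(α⁻¹(h₂))` induced by a
cleft extension. -/
def cleftAct (HH : HomHopf k H) (BB : RComodAlg k H B HH) (γ γ' : H →ₗ[k] B)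
    (h : H) (a : B) : B :=
  ∑ i ∈ HH.T h,
    BB.mul (BB.mul (γ (HH.α.symm (HH.α.symm (HH.d1 h i)))) (BB.β.symm a))
      (γ' (HH.α.symm (HH.d2 h i)))

/-- The crossed-product cocycle `σ(h,g) = (γ(α⁻³(h₁))γ(α⁻³(g₁)))γ⁻¹(α⁻³(h₂g₂))`
induced by a cleft extension. -/
def cleftSigma (HH : HomHopf k H) (BB : RComodAlg k H B HH) (γ γ' : H →ₗ[k] B)
    (h g : H) : B :=
  ∑ i ∈ HH.T h, ∑ j ∈ HH.T g,
    BB.mul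
      (BB.mul (γ (HH.α.symm (HH.α.symm (HH.α.symm (HH.d1 h i)))))
        (γ (HH.α.symm (HH.α.symm (HH.α.symm (HH.d1 g j))))))
      (γ' (HH.α.symm (HH.α.symm (HH.α.symm (HH.mul (HH.d2 h i) (HH.d2 g j))))))


theorem cleftAct_eq_lift (HH : HomHopf k H) (BB : RComodAlg k H B HH) (γ γ' : H →ₗ[k] B)
    (h : H) (a : B) :
    cleftAct HH BB γ γ' h a = lift (BB.mul.compl₂ γ') (map₂ BB.mul HH.mul
      (map γ LinearMap.id (HH.comul (HH.α.symm (HH.α.symm h)))) (BB.β.symm a ⊗ₜ HH.one)) := by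
  simp only [HH.comul_alpha_symm]
  simp [cleftAct, HH.repr, map_sum, HH.mul_one]

theorem cleftSigma_eq_lift (HH : HomHopf k H) (BB : RComodAlg k H B HH) (γ γ' : H →ₗ[k] B)
    (h g : H) :
    cleftSigma HH BB γ γ' h g = lift (BB.mul.compl₂ γ') (map₂ BB.mul HH.mul
      (map γ LinearMap.id (HH.comul (HH.α.symm (HH.α.symm (HH.α.symm h)))))
      (map γ LinearMap.id (HH.comul (HH.α.symm (HH.α.symm (HH.α.symm g)))))) := by
  simp only [HH.comul_alpha_symm]
  simp [cleftSigma, HH.repr, map_sum, HH.alpha_symm_mul]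
  exact Finset.sum_comm

/-- For a cleft extension `A = B^{coH} ⊆ B` via `γ`, the induced
action `h·a` and cocycle `σ(h,g)` take values in the coinvariants `A = B^{coH}`. -/
theorem cleft_act_sigma_coinvariant
    (HH : HomHopf k H) (BB : RComodAlg k H B HH) (γ γ' : H →ₗ[k] B)
    (hγ : CleftData BB γ γ')
    (hγ'ρ : ∀ h, BB.ρ (γ' h) = ∑ i ∈ HH.T h, γ' (HH.d2 h i) ⊗ₜ[k] HH.S (HH.d1 h i)) :
    (∀ h : H, ∀ a : B, BB.ρ a = BB.β a ⊗ₜ[k] HH.one →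
      BB.ρ (cleftAct HH BB γ γ' h a) = BB.β (cleftAct HH BB γ γ' h a) ⊗ₜ[k] HH.one) ∧
    (∀ h g : H,
      BB.ρ (cleftSigma HH BB γ γ' h g) = BB.β (cleftSigma HH BB γ γ' h g) ⊗ₜ[k] HH.one) := by
  obtain ⟨hγρ, hγα, -⟩ := hγ
  have hγ_cotensor := BB.isCotensor_map_comul hγρ hγα
  refine ⟨fun h a ha => ?_, fun h g => ?_⟩
  · rw [cleftAct_eq_lift]
    exact ((hγ_cotensor _).mul (BB.isCotensor_tmul_one
      (BB.rho_beta_symm_of_coinvariant ha))).rho_lift_mul hγ'ρ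
  · rw [cleftSigma_eq_lift]
    exact ((hγ_cotensor _).mul (hγ_cotensor _)).rho_lift_mul hγ'ρ

end S6
end
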